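/- Let w ∈ ℕ, let π : ℤ → ℤ be a bijection with |π(i) − i| ≤ w for all i, let P be its permutation operator on ℓ²(ℤ), and set B := Q P Q + (I − Q). Then the kernel of B is the (finite-dimensional) span of the basis vectors e_j with j ≥ 1 and π⁻¹(j) ≤ 0, so dim ker(B) = #{ j ≥ 1 : π⁻¹(j) ≤ 0 }; moreover the range of B is closed and its codimension in ℓ²(ℤ) equals #{ i ≥ 1 : π(i) ≤ 0 }. -/

import Mathlib

noncomputable section

/-- `ℓ²(ℤ)`, the Hilbert space of square-summable complex sequences indexed by `ℤ`. -/
abbrev H : Type := lp (fun _ : ℤ => ℂ) 2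

/-- The standard basis vector `e_j` of `ℓ²(ℤ)`. -/
def stdBasis (j : ℤ) : H := lp.single 2 j 1

/-!
In coordinates, `(B x)_i` is `x_{π i}` if `i ≥ 1` and `π i ≥ 1`, is `0` if `i ≥ 1` and `π i ≤ 0`,
and is `x_i` if `i ≤ 0`. Thus `B` is a partial permutation of coordinates: it never reads the
coordinates `j ≥ 1` with `π⁻¹ j ≤ 0`, so its kernel consists of the vectors supported there, and it
never writes the coordinates `i ≥ 1` with `π i ≤ 0`, so its range is the closed subspace of vectors
vanishing there. The band condition confines both index sets to `[1, w]`.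
-/

open scoped ENNReal

theorem Memℓp.comp_equiv {ι κ E : Type*} [NormedAddCommGroup E] {p : ℝ≥0∞} {f : ι → E}
    (hf : Memℓp f p) (e : κ ≃ ι) : Memℓp (f ∘ e) p := by
  rcases p.trichotomy with rfl | rfl | hp
  · exact memℓp_zero (hf.finite_dsupport.preimage e.injective.injOn)
  · exact memℓp_infty (hf.bddAbove.mono (Set.range_comp_subset_range e fun i => ‖f i‖))
  · exact memℓp_gen (e.summable_iff.2 (hf.summable hp))

namespace lp

variable {ι : Type*} (𝕜 : Type*) [NormedField 𝕜] (p : ℝ≥0∞)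

def vanishingOn (S : Set ι) : Submodule 𝕜 (lp (fun _ : ι => 𝕜) p) :=
  ⨅ i ∈ S, LinearMap.ker (lp.evalₗ (𝕜 := 𝕜) (fun _ : ι => 𝕜) p i)

variable {𝕜 p}

theorem mem_vanishingOn {S : Set ι} {x : lp (fun _ : ι => 𝕜) p} :
    x ∈ vanishingOn 𝕜 p S ↔ ∀ i ∈ S, x i = 0 := by
  simp [vanishingOn]

theorem isClosed_vanishingOn [Fact (1 ≤ p)] (S : Set ι) :
    IsClosed (vanishingOn 𝕜 p S : Set (lp (fun _ : ι => 𝕜) p)) := by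
  simp only [vanishingOn, Submodule.coe_iInf]
  exact isClosed_biInter fun i _ => (evalCLM 𝕜 (fun _ : ι => 𝕜) p i).isClosed_ker

theorem eq_sum_single_of_forall_notMem {x : lp (fun _ : ι => 𝕜) p} {s : Finset ι}
    [DecidableEq ι] (hx : ∀ i ∉ s, x i = 0) : x = ∑ i ∈ s, lp.single p i (x i) := by
  ext i
  simp only [coeFn_sum, Finset.sum_apply, lp.single_apply, Finset.sum_pi_single]
  split_ifs with hi
  · rfl
  · exact hx i hi

theorem linearIndependent_single_one [DecidableEq ι] :
    LinearIndependent 𝕜 fun i : ι => lp.single p i (1 : 𝕜) := by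
  refine LinearIndependent.of_comp (LinearMap.pi fun i => lp.evalₗ (fun _ : ι => 𝕜) p i) ?_
  have h : (LinearMap.pi fun i => lp.evalₗ (𝕜 := 𝕜) (fun _ : ι => 𝕜) p i) ∘
      (fun i : ι => lp.single p i (1 : 𝕜)) = fun i => Pi.single i 1 := by
    ext
    simp
  rw [h]
  exact Pi.linearIndependent_single_one ι 𝕜

theorem span_single_one_image [DecidableEq ι] {K : Set ι} (hK : K.Finite) :
    Submodule.span 𝕜 ((fun i => lp.single p i (1 : 𝕜)) '' K) = vanishingOn 𝕜 p Kᶜ := by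
  apply le_antisymm
  · rw [Submodule.span_le]
    rintro _ ⟨j, hj, rfl⟩
    rw [SetLike.mem_coe, mem_vanishingOn]
    intro i hi
    exact lp.single_apply_ne p j 1 (ne_of_mem_of_not_mem hj hi).symm
  · intro x hx
    rw [eq_sum_single_of_forall_notMem (s := hK.toFinset) fun i hi =>
      mem_vanishingOn.1 hx i (by simpa using hi)]
    refine Submodule.sum_mem _ fun i hi => ?_
    rw [← mul_one (x i), ← smul_eq_mul, lp.single_smul]
    exact Submodule.smul_mem _ _ (Submodule.subset_span ⟨i, by simpa using hi, rfl⟩)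

theorem finrank_span_single_one_image [DecidableEq ι] {K : Set ι} (hK : K.Finite) :
    Module.finrank 𝕜 (Submodule.span 𝕜 ((fun i => lp.single p i (1 : 𝕜)) '' K)) = K.ncard := by
  have := hK.fintype
  rw [Set.image_eq_range, Set.ncard_eq_toFinset_card', Set.toFinset_card]
  exact finrank_span_eq_card (linearIndependent_single_one.comp _ Subtype.val_injective)

theorem finrank_quotient_vanishingOn {S : Set ι} (hS : S.Finite) :
    Module.finrank 𝕜 (lp (fun _ : ι => 𝕜) p ⧸ vanishingOn 𝕜 p S) = S.ncard := by
  classical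
  have := hS.fintype
  let φ : lp (fun _ : ι => 𝕜) p →ₗ[𝕜] (S → 𝕜) := LinearMap.pi fun i => lp.evalₗ _ p (i : ι)
  have hker : LinearMap.ker φ = vanishingOn 𝕜 p S := by
    ext x
    simp [φ, mem_vanishingOn, funext_iff]
  have hsurj : Function.Surjective φ := by
    intro c
    refine ⟨∑ i : S, lp.single p (i : ι) (c i), funext fun j => ?_⟩
    simp [φ, Pi.single_apply, Subtype.val_inj]
  rw [← hker, (φ.quotKerEquivOfSurjective hsurj).finrank_eq, Module.finrank_pi,
    Set.ncard_eq_toFinset_card', Set.toFinset_card]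

end lp

section Compression

variable {π : ℤ ≃ ℤ} {P Q : H →L[ℂ] H}

theorem compression_apply
    (hP : ∀ (x : H) (i : ℤ), P x i = x (π i))
    (hQ : ∀ (x : H) (i : ℤ), Q x i = if 1 ≤ i then x i else 0) (x : H) (i : ℤ) :
    (Q ∘L P ∘L Q + (1 - Q)) x i = if 1 ≤ i then (if 1 ≤ π i then x (π i) else 0) else x i := by
  simp only [add_apply, sub_apply, ContinuousLinearMap.comp_apply, one_apply_eq_self,
    lp.coeFn_add, lp.coeFn_sub, Pi.add_apply, Pi.sub_apply, hQ, hP]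
  split_ifs <;> simp

theorem ker_compression
    (hP : ∀ (x : H) (i : ℤ), P x i = x (π i))
    (hQ : ∀ (x : H) (i : ℤ), Q x i = if 1 ≤ i then x i else 0) :
    LinearMap.ker ((Q ∘L P ∘L Q + (1 - Q) : H →L[ℂ] H) : H →ₗ[ℂ] H) =
      lp.vanishingOn ℂ 2 {j : ℤ | 1 ≤ j ∧ π.symm j ≤ 0}ᶜ := by
  ext x
  simp only [LinearMap.mem_ker, ContinuousLinearMap.coe_coe, lp.mem_vanishingOn, Set.mem_compl_iff,
    Set.mem_ofPred_eq, not_and, not_le]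
  constructor
  · intro hx j hj
    have hBx i : (if 1 ≤ i then (if 1 ≤ π i then x (π i) else 0) else x i) = 0 := by
      rw [← compression_apply hP hQ, hx]; rfl
    by_cases h1 : 1 ≤ j
    · have h2 : 1 ≤ π.symm j := hj h1
      simpa [h1, h2] using hBx (π.symm j)
    · simpa [h1] using hBx j
  · intro hx
    ext i
    rw [compression_apply hP hQ]
    split_ifs with h1 h2
    · exact hx _ fun _ => by rw [Equiv.symm_apply_apply]; omega
    · rfl
    · exact hx _ fun h => absurd h h1

theorem range_compression
    (hP : ∀ (x : H) (i : ℤ), P x i = x (π i))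
    (hQ : ∀ (x : H) (i : ℤ), Q x i = if 1 ≤ i then x i else 0) :
    LinearMap.range ((Q ∘L P ∘L Q + (1 - Q) : H →L[ℂ] H) : H →ₗ[ℂ] H) =
      lp.vanishingOn ℂ 2 {i : ℤ | 1 ≤ i ∧ π i ≤ 0} := by
  ext y
  simp only [LinearMap.mem_range, ContinuousLinearMap.coe_coe, lp.mem_vanishingOn,
    Set.mem_ofPred_eq, and_imp]
  constructor
  · rintro ⟨x, rfl⟩ i h1 h2
    rw [compression_apply hP hQ, if_pos h1, if_neg (by omega)]
  · intro hy
    let z : H := ⟨fun j => Q y (π.symm j), (lp.memℓp (Q y)).comp_equiv π.symm⟩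
    refine ⟨Q z + (y - Q y), ?_⟩
    ext i
    rw [compression_apply hP hQ]
    by_cases h1 : 1 ≤ i
    · by_cases h2 : 1 ≤ π i
      · simp [z, hQ, h1, h2]
      · simpa [h1, h2] using (hy i h1 (by omega)).symm
    · simp [hQ, h1]

end Compression

theorem finite_setOf_one_le_and_le_zero {σ : ℤ → ℤ} (w : ℕ) (hσ : ∀ i, |σ i - i| ≤ w) :
    {i : ℤ | 1 ≤ i ∧ σ i ≤ 0}.Finite := by
  refine (Set.finite_Icc 1 (w : ℤ)).subset fun i ⟨h1, h2⟩ => ⟨h1, ?_⟩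
  linarith [(abs_le.1 (hσ i)).1]

/-- For a banded permutation `π` with permutation operator `P` and
`B = Q P Q + (I − Q)`: the kernel of `B` is the span of the basis vectors `e_j` with
`j ≥ 1` and `π⁻¹(j) ≤ 0`, so `dim ker B = #{ j ≥ 1 : π⁻¹(j) ≤ 0 }`; the range of `B`
is closed and its codimension equals `#{ i ≥ 1 : π(i) ≤ 0 }`. -/
theorem kernel_and_range_of_compression (w : ℕ) (π : ℤ ≃ ℤ)
    (hband : ∀ i : ℤ, |π i - i| ≤ (w : ℤ))
    (P Q : H →L[ℂ] H)
    (hP : ∀ (x : H) (i : ℤ), P x i = x (π i))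
    (hQ : ∀ (x : H) (i : ℤ), Q x i = if 1 ≤ i then x i else 0) :
    LinearMap.ker ((Q ∘L P ∘L Q + (1 - Q) : H →L[ℂ] H) : H →ₗ[ℂ] H) =
      Submodule.span ℂ (stdBasis '' {j : ℤ | 1 ≤ j ∧ π.symm j ≤ 0}) ∧
    Module.finrank ℂ (LinearMap.ker ((Q ∘L P ∘L Q + (1 - Q) : H →L[ℂ] H) : H →ₗ[ℂ] H)) =
      {j : ℤ | 1 ≤ j ∧ π.symm j ≤ 0}.ncard ∧
    IsClosed (LinearMap.range ((Q ∘L P ∘L Q + (1 - Q) : H →L[ℂ] H) : H →ₗ[ℂ] H) : Set H) ∧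
    Module.finrank ℂ (H ⧸ LinearMap.range ((Q ∘L P ∘L Q + (1 - Q) : H →L[ℂ] H) : H →ₗ[ℂ] H)) =
      {i : ℤ | 1 ≤ i ∧ π i ≤ 0}.ncard := by
  have hK : {j : ℤ | 1 ≤ j ∧ π.symm j ≤ 0}.Finite :=
    finite_setOf_one_le_and_le_zero w fun j => by simpa [abs_sub_comm] using hband (π.symm j)
  have hS : {i : ℤ | 1 ≤ i ∧ π i ≤ 0}.Finite := finite_setOf_one_le_and_le_zero w hband
  have hker : LinearMap.ker ((Q ∘L P ∘L Q + (1 - Q) : H →L[ℂ] H) : H →ₗ[ℂ] H) =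
      Submodule.span ℂ (stdBasis '' {j : ℤ | 1 ≤ j ∧ π.symm j ≤ 0}) :=
    (ker_compression hP hQ).trans (lp.span_single_one_image hK).symm
  rw [hker, range_compression hP hQ]
  exact ⟨rfl, lp.finrank_span_single_one_image hK, lp.isClosed_vanishingOn _,
    lp.finrank_quotient_vanishingOn hS⟩
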